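/- arXiv:1908.07351 — 2 statements merged into one kernel-verified Lean document; each statement's English description precedes it below -/
import Mathlib

section
/- For every σ ∈ ℝ² with σ_1, σ_2 > 0 there exists an entire function f : ℂ² → ℂ of exponential type σ, not identically zero, whose restriction to ℝ² lies in L^p(ℝ²) for every 1 ≤ p ≤ ∞, such that f(2πu/σ) = 0 and (∂^m f/∂z_j^m)(2πu/σ) = 0 for all u ∈ ℤ², for j = 1, 2, and for all integers m ≥ 1. In particular, a two-dimensional sampling series involving only f and its pure (non-mixed) partial derivatives at the points 2πu/σ cannot reconstruct every such f. -/
open MeasureTheory Complex Real Filter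

/-- Partial derivative of `f : ℂ² → ℂ` in the `j`-th coordinate direction. -/
noncomputable def pderivC {n : ℕ} (j : Fin n) (f : (Fin n → ℂ) → ℂ) : (Fin n → ℂ) → ℂ :=
  fun z => fderiv ℂ f z (Pi.single j 1)

/-- The sample point `2πu/σ` viewed in `ℂ²`. -/
noncomputable def samplePt {n : ℕ} (σ : Fin n → ℝ) (u : Fin n → ℤ) : Fin n → ℂ :=
  fun j => ((2 * Real.pi * (u j : ℝ) / σ j : ℝ) : ℂ)

/-!
The one-variable function `sincPair b w = sinc (b w - π) * sinc (b w + π)`, which is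
`sin² (b w) / ((b w)² - π²)`, is entire of exponential type `2b`, bounded and integrable on `ℝ`,
and vanishes on all of `(π / b) ℤ`: at `kπ / b` one of its two factors is evaluated at a nonzero
multiple of `π`. With `b = σ_j / 2`, the tensor product `f z = ∏ j, sincPair (σ j / 2) (z j)` has
type `σ` and lies in `L¹ ∩ L^∞`, hence in every `L^p`. A pure derivative in `z_j` differentiates
only the `j`-th factor, so the factor in the other variable survives and kills every sample.
-/

namespace Complex

noncomputable def sinc : ℂ → ℂ := dslope sin 0

theorem differentiable_sinc : Differentiable ℂ sinc :=
  differentiableOn_univ.mp <|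
    (differentiableOn_dslope (by simp)).mpr differentiable_sin.differentiableOn

theorem norm_sin_le_exp_abs_im (w : ℂ) : ‖sin w‖ ≤ Real.exp |w.im| := by
  have h₁ : ‖exp (-w * I)‖ ≤ Real.exp |w.im| := by
    rw [norm_exp]; simpa using le_abs_self w.im
  have h₂ : ‖exp (w * I)‖ ≤ Real.exp |w.im| := by
    rw [norm_exp]; simpa using neg_le_abs w.im
  calc ‖sin w‖ = ‖exp (-w * I) - exp (w * I)‖ / 2 := by simp [sin]
    _ ≤ (‖exp (-w * I)‖ + ‖exp (w * I)‖) / 2 := by gcongr; exact norm_sub_le _ _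
    _ ≤ Real.exp |w.im| := by linarith

theorem sinc_of_ne_zero {w : ℂ} (hw : w ≠ 0) : sinc w = sin w / w := by
  rw [sinc, dslope_of_ne _ hw, slope_def_field, sin_zero, sub_zero, sub_zero]

theorem ofReal_sinc (x : ℝ) : (Real.sinc x : ℂ) = sinc x := by
  rcases eq_or_ne x 0 with rfl | hx
  · simp [sinc]
  · rw [sinc_of_ne_zero (ofReal_ne_zero.mpr hx), Real.sinc_of_ne_zero hx, ofReal_div, ofReal_sin]

theorem sinc_int_mul_pi {k : ℤ} (hk : k ≠ 0) : sinc (k * π) = 0 := by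
  rw [sinc_of_ne_zero (by simp [hk, Real.pi_ne_zero]), sin_int_mul_pi, zero_div]

theorem sinc_ne_zero_of_im_ne_zero {w : ℂ} (hw : w.im ≠ 0) : sinc w ≠ 0 := by
  have hw0 : w ≠ 0 := by rintro rfl; exact hw rfl
  rw [sinc_of_ne_zero hw0, div_ne_zero_iff, Ne, sin_eq_zero_iff]
  refine ⟨?_, hw0⟩
  rintro ⟨k, rfl⟩
  simp at hw

theorem exists_norm_sinc_le : ∃ C, ∀ w : ℂ, ‖sinc w‖ ≤ C * Real.exp |w.im| := by
  obtain ⟨M, hM⟩ := (isCompact_closedBall (0 : ℂ) 1).exists_bound_of_continuousOn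
    differentiable_sinc.continuous.continuousOn
  refine ⟨max M 1, fun w => ?_⟩
  have hexp : 1 ≤ Real.exp |w.im| := Real.one_le_exp (abs_nonneg _)
  rcases le_or_gt ‖w‖ 1 with hw | hw
  · calc ‖sinc w‖ ≤ max M 1 := (hM w (by simpa using hw)).trans (le_max_left _ _)
      _ ≤ max M 1 * Real.exp |w.im| := le_mul_of_one_le_right (by positivity) hexp
  · rw [sinc_of_ne_zero (norm_pos_iff.mp (one_pos.trans hw)), norm_div]
    calc ‖sin w‖ / ‖w‖ ≤ ‖sin w‖ := div_le_self (norm_nonneg _) hw.le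
      _ ≤ Real.exp |w.im| := norm_sin_le_exp_abs_im w
      _ ≤ max M 1 * Real.exp |w.im| := le_mul_of_one_le_left (by positivity) (le_max_right _ _)

end Complex

namespace Real

theorem sinc_sq_le (x : ℝ) : sinc x ^ 2 ≤ 2 * (1 + x ^ 2)⁻¹ := by
  have hsin : sinc x * x = sin x := by
    rcases eq_or_ne x 0 with rfl | hx
    · simp
    · rw [sinc_of_ne_zero hx, div_mul_cancel₀ _ hx]
  rw [← div_eq_mul_inv, le_div_iff₀ (by positivity)]
  calc sinc x ^ 2 * (1 + x ^ 2) = sinc x ^ 2 + sin x ^ 2 := by rw [← hsin]; ring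
    _ ≤ 1 + 1 := add_le_add ((sq_le_one_iff_abs_le_one _).mpr (abs_sinc_le_one x))
        (sin_sq_le_one x)
    _ = 2 := one_add_one_eq_two

end Real

noncomputable def sincPair (b : ℝ) (w : ℂ) : ℂ :=
  Complex.sinc (b * w - π) * Complex.sinc (b * w + π)

theorem differentiable_sincPair (b : ℝ) : Differentiable ℂ (sincPair b) :=
  (Complex.differentiable_sinc.comp (by fun_prop)).mul
    (Complex.differentiable_sinc.comp (by fun_prop))

theorem sincPair_ofReal (b x : ℝ) :
    sincPair b x = ↑(Real.sinc (b * x - π) * Real.sinc (b * x + π)) := by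
  rw [ofReal_mul, Complex.ofReal_sinc, Complex.ofReal_sinc, sincPair]
  push_cast; rfl

theorem sincPair_ofReal_eq_zero {b t : ℝ} {k : ℤ} (h : b * t = k * π) : sincPair b t = 0 := by
  have hbt : (b : ℂ) * t = k * π := by exact_mod_cast h
  rw [sincPair, hbt, mul_eq_zero]
  rcases eq_or_ne k 1 with rfl | hk
  · right
    convert Complex.sinc_int_mul_pi (k := 2) two_ne_zero using 2
    push_cast; ring
  · left
    convert Complex.sinc_int_mul_pi (k := k - 1) (sub_ne_zero.mpr hk) using 2
    push_cast; ring

theorem sincPair_I_div_ne_zero {b : ℝ} (hb : b ≠ 0) : sincPair b (I / b) ≠ 0 := by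
  rw [sincPair, mul_div_cancel₀ _ (ofReal_ne_zero.mpr hb)]
  exact mul_ne_zero (Complex.sinc_ne_zero_of_im_ne_zero (by simp))
    (Complex.sinc_ne_zero_of_im_ne_zero (by simp))

theorem exists_norm_sincPair_le {b : ℝ} (hb : 0 ≤ b) :
    ∃ C, ∀ w : ℂ, ‖sincPair b w‖ ≤ C * Real.exp (2 * b * |w.im|) := by
  obtain ⟨C, hC⟩ := Complex.exists_norm_sinc_le
  refine ⟨C * C, fun w => ?_⟩
  have him : ∀ c : ℝ, |(b * w + c).im| = b * |w.im| := fun c => by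
    simp [abs_mul, abs_of_nonneg hb]
  have h₁ := hC (b * w - π)
  have h₂ := hC (b * w + π)
  rw [sub_eq_add_neg, ← ofReal_neg, him] at h₁
  rw [him] at h₂
  calc ‖sincPair b w‖ ≤ C * Real.exp (b * |w.im|) * (C * Real.exp (b * |w.im|)) := by
        rw [sincPair, norm_mul, sub_eq_add_neg, ← ofReal_neg]
        exact mul_le_mul h₁ h₂ (norm_nonneg _) ((norm_nonneg _).trans h₁)
    _ = C * C * Real.exp (2 * b * |w.im|) := by rw [mul_mul_mul_comm, ← Real.exp_add]; ring_nf

theorem norm_sincPair_ofReal_le_one (b x : ℝ) : ‖sincPair b x‖ ≤ 1 := by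
  rw [sincPair_ofReal, norm_real, Real.norm_eq_abs, abs_mul]
  exact mul_le_one₀ (Real.abs_sinc_le_one _) (abs_nonneg _) (Real.abs_sinc_le_one _)

theorem integrable_sincPair {b : ℝ} (hb : b ≠ 0) : Integrable (fun x : ℝ => sincPair b x) := by
  have hdom : Integrable fun x : ℝ => (1 + (b * x - π) ^ 2)⁻¹ + (1 + (b * x + π) ^ 2)⁻¹ :=
    ((integrable_inv_one_add_sq.comp_sub_right π).comp_mul_left' hb).add
      ((integrable_inv_one_add_sq.comp_add_right π).comp_mul_left' hb)
  refine hdom.mono'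
    ((differentiable_sincPair b).continuous.comp continuous_ofReal).aestronglyMeasurable
    (Eventually.of_forall fun x => ?_)
  rw [sincPair_ofReal, norm_real, Real.norm_eq_abs, abs_mul]
  -- AM-GM, then the square bound on each factor
  nlinarith [Real.sinc_sq_le (b * x - π), Real.sinc_sq_le (b * x + π),
    sq_nonneg (|Real.sinc (b * x - π)| - |Real.sinc (b * x + π)|),
    sq_abs (Real.sinc (b * x - π)), sq_abs (Real.sinc (b * x + π))]

theorem MeasureTheory.Integrable.memLp_of_norm_le {α E : Type*} [MeasurableSpace α]
    [NormedAddCommGroup E] {μ : Measure α} {f : α → E} (hf : Integrable f μ) {M : ℝ}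
    (hM : ∀ᵐ x ∂μ, ‖f x‖ ≤ M) {q : ENNReal} (hq : 1 ≤ q) : MemLp f q μ := by
  rcases eq_or_ne q ⊤ with rfl | hq_top
  · exact memLp_top_of_bound hf.aestronglyMeasurable M hM
  have hq0 : q ≠ 0 := (one_pos.trans_le hq).ne'
  have hp : 1 ≤ q.toReal := by simpa using ENNReal.toReal_mono hq_top hq
  have hpow : Integrable (fun x => ‖f x‖ ^ q.toReal) μ := by
    refine (hf.norm.const_mul (M ^ (q.toReal - 1))).mono'
      (hf.aestronglyMeasurable.norm.aemeasurable.pow_const _).aestronglyMeasurable ?_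
    filter_upwards [hM] with x hx
    rw [Real.norm_of_nonneg (by positivity)]
    calc ‖f x‖ ^ q.toReal = ‖f x‖ ^ (q.toReal - 1) * ‖f x‖ := by
          rw [← Real.rpow_add_one' (norm_nonneg _) (by linarith), sub_add_cancel]
      _ ≤ M ^ (q.toReal - 1) * ‖f x‖ := by gcongr
  rw [← memLp_norm_rpow_iff hf.aestronglyMeasurable hq0 hq_top, ENNReal.div_self hq0 hq_top,
    memLp_one_iff_integrable]
  exact hpow

theorem memLp_pi_prod {ι E 𝕜 : Type*} [Fintype ι] [MeasurableSpace E] [RCLike 𝕜]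
    {μ : ι → Measure E} [∀ i, SigmaFinite (μ i)] {f : ι → E → 𝕜} {M : ι → ℝ}
    (hf : ∀ i, Integrable (f i) (μ i)) (hM : ∀ i x, ‖f i x‖ ≤ M i) {q : ENNReal} (hq : 1 ≤ q) :
    MemLp (fun x => ∏ i, f i (x i)) q (Measure.pi μ) := by
  refine (Integrable.fintype_prod hf).memLp_of_norm_le (M := ∏ i, M i)
    (Eventually.of_forall fun x => ?_) hq
  rw [norm_prod]
  exact Finset.prod_le_prod (fun _ _ => norm_nonneg _) fun i _ => hM i (x i)

theorem norm_prod_le_mul_exp_sum {ι : Type*} [Fintype ι] {g : ι → ℂ → ℂ} {C τ : ι → ℝ}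
    (hg : ∀ i w, ‖g i w‖ ≤ C i * Real.exp (τ i * |w.im|)) (z : ι → ℂ) :
    ‖∏ i, g i (z i)‖ ≤ (∏ i, C i) * Real.exp (∑ i, τ i * |(z i).im|) := by
  rw [norm_prod, Real.exp_sum, ← Finset.prod_mul_distrib]
  exact Finset.prod_le_prod (fun _ _ => norm_nonneg _) fun i _ => hg i (z i)

section PureDerivatives

variable {n : ℕ} {g : Fin n → ℂ → ℂ}

theorem pderivC_prod (hg : ∀ i, Differentiable ℂ (g i)) (j : Fin n) :
    pderivC j (fun z => ∏ i, g i (z i)) =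
      fun z => ∏ i, Function.update g j (deriv (g j)) i (z i) := by
  funext z
  have hcoord : ∀ i, HasFDerivAt (fun z : Fin n → ℂ => g i (z i))
      (deriv (g i) (z i) • ContinuousLinearMap.proj i) z := fun i =>
    (hg i (z i)).hasDerivAt.comp_hasFDerivAt z (hasFDerivAt_apply (𝕜 := ℂ) i z)
  rw [pderivC, (HasFDerivAt.finsetProd fun i _ => hcoord i).fderiv,
    ← Finset.mul_prod_erase _ _ (Finset.mem_univ j), sum_apply, Finset.sum_eq_single j
    (fun i _ hij => by simp [Pi.single_eq_of_ne hij]) (by simp), Function.update_self]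
  simp only [smul_apply, ContinuousLinearMap.proj_apply, Pi.single_eq_same,
    smul_eq_mul, mul_one]
  rw [mul_comm]
  congr 1
  exact Finset.prod_congr rfl fun i hi => by rw [Function.update_of_ne (Finset.ne_of_mem_erase hi)]

theorem iterate_pderivC_prod (hg : ∀ i, Differentiable ℂ (g i)) (j : Fin n) (m : ℕ) :
    (pderivC j)^[m] (fun z => ∏ i, g i (z i)) =
      fun z => ∏ i, Function.update g j (deriv^[m] (g j)) i (z i) := by
  induction m with
  | zero => simp
  | succ m ih =>
    have hdiff : ∀ i, Differentiable ℂ (Function.update g j (deriv^[m] (g j)) i) := by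
      intro i
      rcases eq_or_ne i j with rfl | hij
      · rw [Function.update_self]
        exact ((hg i).contDiff.iterate_deriv m).differentiable (by simp)
      · rw [Function.update_of_ne hij]
        exact hg i
    rw [Function.iterate_succ_apply', ih, pderivC_prod hdiff, Function.update_idem,
      Function.update_self, Function.iterate_succ_apply']

theorem iterate_pderivC_prod_eq_zero (hg : ∀ i, Differentiable ℂ (g i)) {j i : Fin n}
    (hij : i ≠ j) {z : Fin n → ℂ} (hz : g i (z i) = 0) (m : ℕ) :
    ((pderivC j)^[m] (fun w => ∏ k, g k (w k))) z = 0 := by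
  rw [iterate_pderivC_prod hg]
  exact Finset.prod_eq_zero (Finset.mem_univ i) (by rwa [Function.update_of_ne hij])

end PureDerivatives

/-- There is a nonzero entire function on `ℂ²` of exponential type `σ`, lying in
`L^p(ℝ²)` for every `1 ≤ p ≤ ∞`, which vanishes together with all of its pure
(non-mixed) partial derivatives at every sample point `2πu/σ`, `u ∈ ℤ²`. -/
theorem pure_derivative_sampling_fails (σ : Fin 2 → ℝ) (hσ : ∀ j, 0 < σ j) :
    ∃ f : (Fin 2 → ℂ) → ℂ,
      Differentiable ℂ f ∧
      (∃ C, ∀ z, ‖f z‖ ≤ C * Real.exp (∑ j, σ j * |(z j).im|)) ∧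
      f ≠ 0 ∧
      (∀ q : ENNReal, 1 ≤ q →
        MemLp (fun x : Fin 2 → ℝ => f (fun j => (x j : ℂ))) q volume) ∧
      (∀ u : Fin 2 → ℤ, f (samplePt σ u) = 0) ∧
      (∀ u : Fin 2 → ℤ, ∀ j : Fin 2, ∀ m : ℕ, 1 ≤ m →
        ((pderivC j)^[m] f) (samplePt σ u) = 0) := by
  have hb : ∀ j, 0 < σ j / 2 := fun j => half_pos (hσ j)
  have hdiff : ∀ j, Differentiable ℂ (sincPair (σ j / 2)) := fun j => differentiable_sincPair _
  have hsample : ∀ u j, sincPair (σ j / 2) (samplePt σ u j) = 0 := fun u j =>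
    sincPair_ofReal_eq_zero (k := u j) (by field_simp [(hσ j).ne'])
  choose C hC using fun j => exists_norm_sincPair_le (hb j).le
  refine ⟨fun z => ∏ j, sincPair (σ j / 2) (z j), ?_, ?_, ?_, ?_, ?_, ?_⟩
  · fun_prop
  · refine ⟨∏ j, C j, norm_prod_le_mul_exp_sum fun j w => ?_⟩
    simpa [mul_div_cancel₀ _ (two_ne_zero' ℝ)] using hC j w
  · intro h
    have h₀ := congrFun h fun j => I / ↑(σ j / 2)
    rw [Pi.zero_apply] at h₀
    exact Finset.prod_ne_zero_iff.mpr (fun j _ => sincPair_I_div_ne_zero (hb j).ne') h₀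
  · exact fun q hq => memLp_pi_prod (fun j => integrable_sincPair (hb j).ne')
      (fun j => norm_sincPair_ofReal_le_one _) hq
  · exact fun u => Finset.prod_eq_zero (Finset.mem_univ 0) (hsample u 0)
  · exact fun u j m _ => iterate_pderivC_prod_eq_zero hdiff (i := j.rev)
      (by fin_cases j <;> decide) (hsample u j.rev) m
end

section
/- Let f : ℂ → ℂ be an entire function of exponential type π (i.e. |f(z)| ≤ C·e^{π|Im z|} for some constant C) that is bounded on ℝ. If f(2k) = 0 and f′(2k) = 0 for every k ∈ ℤ, then there is a constant c ∈ ℂ such that f(z) = c·sin²(πz/2) for all z ∈ ℂ. -/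
open Complex Real Filter Set

/-!
Since the zeros `2k` of `sin (π z / 2)` are simple and `f` vanishes to second order there,
dividing twice gives an entire `g` with `f z = sin (π z / 2) ^ 2 * g z`. On vertical lines
through odd integers and on horizontal lines `|Im z| = T ≥ 1` one has
`‖sin (π z / 2)‖ ^ 2 ≥ c e^{π |Im z|}`, so the type bound on `f` bounds `g` on the boundary of
rectangles around every point, hence everywhere by the maximum modulus principle, and `g` is
constant by Liouville's theorem.
-/

theorem Differentiable.dslope {E : Type*} [NormedAddCommGroup E] [NormedSpace ℂ E]
    [CompleteSpace E] {f : ℂ → E} (hf : Differentiable ℂ f) (a : ℂ) :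
    Differentiable ℂ (dslope f a) := fun z =>
  ((differentiableOn_dslope univ_mem).2 hf.differentiableOn z trivial).differentiableAt univ_mem

theorem exists_differentiable_eq_mul_of_simple_zeros {f g : ℂ → ℂ} (hf : Differentiable ℂ f)
    (hg : Differentiable ℂ g) (hf_zero : ∀ a, g a = 0 → f a = 0)
    (hg_simple : ∀ a, g a = 0 → deriv g a ≠ 0) :
    ∃ h : ℂ → ℂ, Differentiable ℂ h ∧ ∀ z, f z = g z * h z := by
  refine ⟨fun z => if g z = 0 then deriv f z / deriv g z else f z / g z, fun a => ?_, fun z => ?_⟩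
  · by_cases ha : g a = 0
    · -- near a zero `a`, the quotient is `dslope f a / dslope g a`
      have hne : dslope g a a ≠ 0 := by rw [dslope_same]; exact hg_simple a ha
      refine (((hf.dslope a) a).div ((hg.dslope a) a) hne).congr_of_eventuallyEq ?_
      filter_upwards [((hg.dslope a) a).continuousAt.eventually_ne hne] with z hz
      rcases eq_or_ne z a with rfl | hza
      · simp [ha, dslope_same]
      · have hgz : g z = (z - a) * dslope g a z := by
          simpa [ha] using (sub_smul_dslope g a z).symm
        have hfz : f z = (z - a) * dslope f a z := by
          simpa [hf_zero a ha] using (sub_smul_dslope f a z).symm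
        have hgz0 : g z ≠ 0 := hgz ▸ mul_ne_zero (sub_ne_zero.2 hza) hz
        simp only [if_neg hgz0, Pi.div_apply]
        rw [hfz, hgz, mul_div_mul_left _ _ (sub_ne_zero.2 hza)]
    · refine ((hf a).div (hg a) ha).congr_of_eventuallyEq ?_
      filter_upwards [(hg a).continuousAt.eventually_ne ha] with z hz
      simp [hz]
  · by_cases hz : g z = 0
    · simp [hz, hf_zero z hz]
    · simp [hz, mul_div_cancel₀ _ hz]

theorem exists_differentiable_eq_sq_mul_of_simple_zeros {f g : ℂ → ℂ} (hf : Differentiable ℂ f)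
    (hg : Differentiable ℂ g) (hf_zero : ∀ a, g a = 0 → f a = 0 ∧ deriv f a = 0)
    (hg_simple : ∀ a, g a = 0 → deriv g a ≠ 0) :
    ∃ h : ℂ → ℂ, Differentiable ℂ h ∧ ∀ z, f z = g z ^ 2 * h z := by
  obtain ⟨h₁, hh₁, hfh₁⟩ := exists_differentiable_eq_mul_of_simple_zeros hf hg
    (fun a ha => (hf_zero a ha).1) hg_simple
  have hh₁0 : ∀ a, g a = 0 → h₁ a = 0 := by
    intro a ha
    have hderiv : deriv f a = deriv g a * h₁ a := by
      rw [show f = fun z => g z * h₁ z from funext hfh₁, deriv_fun_mul (hg a) (hh₁ a), ha]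
      ring
    simpa [(hf_zero a ha).2, hg_simple a ha] using hderiv.symm
  obtain ⟨h₂, hh₂, hh₁h₂⟩ := exists_differentiable_eq_mul_of_simple_zeros hh₁ hg hh₁0 hg_simple
  exact ⟨h₂, hh₂, fun z => by rw [hfh₁, hh₁h₂]; ring⟩

theorem Complex.norm_sin_sq (z : ℂ) : ‖sin z‖ ^ 2 = Real.sin z.re ^ 2 + Real.sinh z.im ^ 2 := by
  rw [sin_eq, ← ofReal_sin, ← ofReal_cos, ← ofReal_cosh, ← ofReal_sinh, ← ofReal_mul,
    ← ofReal_mul, Complex.sq_norm, normSq_add_mul_I]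
  linear_combination Real.sin z.re ^ 2 * Real.cosh_sq z.im
    + Real.sinh z.im ^ 2 * Real.sin_sq_add_cos_sq z.re

theorem Complex.mul_exp_two_mul_abs_im_le_norm_sin_sq {z : ℂ}
    (hz : π / 2 ≤ |z.im| ∨ Real.cos z.re = 0) :
    ((1 - Real.exp (-π)) / 2) ^ 2 * Real.exp (2 * |z.im|) ≤ ‖sin z‖ ^ 2 := by
  set t := |z.im|
  have hexp : Real.exp (2 * t) = Real.exp t ^ 2 := by rw [← Real.exp_nat_mul]; norm_num
  have hsinh_sq : Real.sinh z.im ^ 2 = Real.sinh t ^ 2 := by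
    rcases abs_choice z.im with h | h <;> simp [t, h]
  have hκ : 0 ≤ (1 - Real.exp (-π)) / 2 * Real.exp t := by
    have := Real.exp_le_one_iff.2 (neg_nonpos.2 pi_pos.le)
    have := Real.exp_pos t
    positivity
  rw [hexp, ← mul_pow, norm_sin_sq, hsinh_sq]
  rcases hz with ht | hcos
  · have hsinh : (1 - Real.exp (-π)) / 2 * Real.exp t ≤ Real.sinh t := by
      have : Real.exp (-t) ≤ Real.exp (-π) * Real.exp t := by
        rw [← Real.exp_add]; exact Real.exp_le_exp.2 (by linarith)
      rw [Real.sinh_eq]; linarith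
    nlinarith [sq_nonneg (Real.sin z.re), pow_le_pow_left₀ hκ hsinh 2]
  · have hcosh : (1 - Real.exp (-π)) / 2 * Real.exp t ≤ Real.cosh t := by
      rw [Real.cosh_eq]; nlinarith [Real.exp_pos (-π), Real.exp_pos t, Real.exp_pos (-t)]
    have hsin : Real.sin z.re ^ 2 = 1 := by nlinarith [Real.sin_sq_add_cos_sq z.re]
    nlinarith [pow_le_pow_left₀ hκ hcosh 2, Real.cosh_sq_sub_sinh_sq t]

theorem Complex.norm_le_of_norm_sin_sq_mul_le {g : ℂ → ℂ} (hg : Differentiable ℂ g) {C : ℝ}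
    (hC : ∀ z, ‖sin z‖ ^ 2 * ‖g z‖ ≤ C * Real.exp (2 * |z.im|)) (z : ℂ) :
    ‖g z‖ ≤ C / ((1 - Real.exp (-π)) / 2) ^ 2 := by
  set k : ℤ := round (z.re / π)
  set T := |z.im| + π / 2 with hT_def
  have hre : k * π - π / 2 < k * π + π / 2 := by linarith [pi_pos]
  have hT : -T < T := by linarith [abs_nonneg z.im, pi_pos, hT_def]
  -- on the boundary of this rectangle around `z`, `‖sin w‖ ^ 2` is comparable to `e^{2 |Im w|}`
  set U : Set ℂ := Ioo (k * π - π / 2) (k * π + π / 2) ×ℂ Ioo (-T) T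
  have hzU : z ∈ closure U := by
    rw [closure_reProdIm, closure_Ioo hre.ne, closure_Ioo hT.ne]
    obtain ⟨hk₁, hk₂⟩ := abs_le.1 (abs_sub_round (z.re / π))
    have hz : z.re = z.re / π * π := by field_simp
    refine ⟨⟨?_, ?_⟩, ?_, ?_⟩
    · nlinarith [pi_pos]
    · nlinarith [pi_pos]
    · linarith [neg_abs_le z.im, pi_pos, hT_def]
    · linarith [le_abs_self z.im, pi_pos, hT_def]
  have hκ : 0 < (1 - Real.exp (-π)) / 2 := by
    have := Real.exp_lt_one_iff.2 (neg_lt_zero.2 pi_pos)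
    linarith
  refine norm_le_of_forall_mem_frontier_norm_le
    ((Metric.isBounded_Ioo _ _).reProdIm (Metric.isBounded_Ioo _ _)) hg.diffContOnCl
    (fun w hw => ?_) hzU
  have hw' : π / 2 ≤ |w.im| ∨ Real.cos w.re = 0 := by
    rw [frontier_reProdIm, closure_Ioo hre.ne, frontier_Ioo hT, frontier_Ioo hre] at hw
    rcases hw with ⟨-, him⟩ | ⟨hwre, -⟩
    · left
      have : |w.im| = T := by
        rcases him with h | h <;> rw [h] <;> simp [abs_of_pos (neg_lt_self_iff.1 hT)]
      linarith [abs_nonneg z.im, hT_def]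
    · right
      rcases hwre with h | h <;> rw [h]
      · rw [show k * π - π / 2 = -(π / 2) + k * π by ring, Real.cos_add_int_mul_pi,
          Real.cos_neg, Real.cos_pi_div_two, mul_zero]
      · rw [show k * π + π / 2 = π / 2 + k * π by ring, Real.cos_add_int_mul_pi,
          Real.cos_pi_div_two, mul_zero]
  have hlow := mul_le_mul_of_nonneg_right (mul_exp_two_mul_abs_im_le_norm_sin_sq hw')
    (norm_nonneg (g w))
  rw [le_div_iff₀ (by positivity)]
  refine le_of_mul_le_mul_right ?_ (Real.exp_pos (2 * |w.im|))
  linarith [hC w]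

theorem Complex.norm_le_of_norm_sin_pi_mul_div_two_sq_mul_le {g : ℂ → ℂ}
    (hg : Differentiable ℂ g) {C : ℝ}
    (hC : ∀ z, ‖sin (π * z / 2)‖ ^ 2 * ‖g z‖ ≤ C * Real.exp (π * |z.im|)) (z : ℂ) :
    ‖g z‖ ≤ C / ((1 - Real.exp (-π)) / 2) ^ 2 := by
  have hπ : (π : ℂ) ≠ 0 := ofReal_ne_zero.2 pi_ne_zero
  have := norm_le_of_norm_sin_sq_mul_le (g := fun w => g (2 * w / π)) (C := C)
    (hg.comp (by fun_prop)) (fun w => ?_) (π * z / 2)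
  · rwa [show 2 * (π * z / 2) / π = z by field_simp] at this
  · have hw : π * (2 * w / π) / 2 = w := by field_simp
    have him : π * |(2 * w / π).im| = 2 * |w.im| := by
      simp only [div_ofReal_im, mul_im, re_ofNat, im_ofNat, zero_mul, add_zero, abs_div,
        abs_mul, Nat.abs_ofNat, abs_of_pos pi_pos]
      field_simp
    simpa only [hw, him] using hC (2 * w / π)

theorem eq_const_mul_sin_sq_of_double_samples_vanish_general
    (f : ℂ → ℂ) (hf : Differentiable ℂ f)
    (C : ℝ) (hC : ∀ z : ℂ, ‖f z‖ ≤ C * Real.exp (Real.pi * |z.im|))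
    (hsamples : ∀ k : ℤ, f ((2 * k : ℤ) : ℂ) = 0 ∧ deriv f ((2 * k : ℤ) : ℂ) = 0) :
    ∃ c : ℂ, ∀ z : ℂ, f z = c * Complex.sin (Real.pi * z / 2) ^ 2 := by
  set s : ℂ → ℂ := fun z => sin (π * z / 2)
  have hπ : (π : ℂ) ≠ 0 := ofReal_ne_zero.2 pi_ne_zero
  have hs_deriv (z : ℂ) : HasDerivAt s (cos (π * z / 2) * (π / 2)) z :=
    (Complex.hasDerivAt_sin _).comp z
      (((hasDerivAt_id z).const_mul (π : ℂ)).div_const 2 |>.congr_deriv (by simp))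
  have hs_zero (a : ℂ) (ha : s a = 0) : ∃ k : ℤ, a = ((2 * k : ℤ) : ℂ) := by
    obtain ⟨k, hk⟩ := sin_eq_zero_iff.1 ha
    exact ⟨k, mul_left_cancel₀ hπ (by push_cast; linear_combination 2 * hk)⟩
  have hs_simple (a : ℂ) (ha : s a = 0) : deriv s a ≠ 0 := by
    rw [(hs_deriv a).deriv]
    refine mul_ne_zero (fun hcos => ?_) (div_ne_zero hπ two_ne_zero)
    have hsin : sin (π * a / 2) = 0 := ha
    simpa [hsin, hcos] using sin_sq_add_cos_sq (π * a / 2)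
  obtain ⟨g, hg, hfg⟩ := exists_differentiable_eq_sq_mul_of_simple_zeros hf
    (fun z => (hs_deriv z).differentiableAt)
    (fun a ha => by obtain ⟨k, rfl⟩ := hs_zero a ha; exact hsamples k) hs_simple
  have hbound (z : ℂ) : ‖g z‖ ≤ C / ((1 - Real.exp (-π)) / 2) ^ 2 :=
    norm_le_of_norm_sin_pi_mul_div_two_sq_mul_le hg
      (fun w => by simpa only [hfg, norm_mul, norm_pow] using hC w) z
  obtain ⟨c, hc⟩ := hg.exists_const_forall_eq_of_bounded
    (isBounded_iff_forall_norm_le.2 ⟨_, forall_mem_range.2 hbound⟩)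
  exact ⟨c, fun z => by rw [hfg, hc, mul_comm]⟩

/-- An entire function of exponential type `π`, bounded on `ℝ`, vanishing to second
order at every even integer, is a constant multiple of `sin² (π z / 2)`. -/
theorem eq_const_mul_sin_sq_of_double_samples_vanish
    (f : ℂ → ℂ) (hf : Differentiable ℂ f)
    (C : ℝ) (hC : ∀ z : ℂ, ‖f z‖ ≤ C * Real.exp (Real.pi * |z.im|))
    (M : ℝ) (hM : ∀ x : ℝ, ‖f (x : ℂ)‖ ≤ M)
    (hsamples : ∀ k : ℤ, f ((2 * k : ℤ) : ℂ) = 0 ∧ deriv f ((2 * k : ℤ) : ℂ) = 0) :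
    ∃ c : ℂ, ∀ z : ℂ, f z = c * Complex.sin (Real.pi * z / 2) ^ 2 :=
  eq_const_mul_sin_sq_of_double_samples_vanish_general f hf C hC hsamples
end
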